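/- Let G be a {K₁,₃**, K₃}-free graph (triangle-free and with no induced K₁,₃**), let C be a longest cycle of G with at least 2 missing vertices, let H be a component of G − V(C) with |V(H)| ≥ 2, let x ∈ V(H), and let u ∈ V(C) be adjacent to x. If C is a longest cycle, then at least one of the edges u⁺²u⁻, u⁺²x lies in E(G), and at least one of u⁻²u⁺, u⁻²x lies in E(G). -/

import Mathlib

open SimpleGraph

def IsCycleEmb {V : Type*} (G : SimpleGraph V) (n : ℕ) (f : ZMod n → V) : Prop :=
  3 ≤ n ∧ Function.Injective f ∧ ∀ i : ZMod n, G.Adj (f i) (f (i + 1))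

def IsLongestCycle {V : Type*} (G : SimpleGraph V) (n : ℕ) (f : ZMod n → V) : Prop :=
  IsCycleEmb G n f ∧ ∀ (m : ℕ) (g : ZMod m → V), IsCycleEmb G m g → m ≤ n

def IsDominatingCycle {V : Type*} (G : SimpleGraph V) (n : ℕ) (f : ZMod n → V) : Prop :=
  IsCycleEmb G n f ∧ ∀ a b : V, G.Adj a b → a ∈ Set.range f ∨ b ∈ Set.range f

def IsCompOutside {V : Type*} (G : SimpleGraph V) (C : Set V) (H : Set V) : Prop :=
  H.Nonempty ∧ Disjoint H C ∧ (G.induce H).Connected ∧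
    ∀ a ∈ H, ∀ b : V, G.Adj a b → b ∉ C → b ∈ H

def TwoConnected {V : Type*} (G : SimpleGraph V) : Prop :=
  3 ≤ Nat.card V ∧ ∀ v : V, (G.induce ({v}ᶜ : Set V)).Connected

def KConnected {V : Type*} (G : SimpleGraph V) (k : ℕ) : Prop :=
  k < Nat.card V ∧ ∀ S : Set V, S.ncard < k → (G.induce (Sᶜ : Set V)).Connected

def HFree {W V : Type*} (H : SimpleGraph W) (G : SimpleGraph V) : Prop :=
  ¬ Nonempty (H ↪g G)

def IsCompleteMultipartite {V : Type*} (G : SimpleGraph V) : Prop :=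
  ∃ s : Setoid V, ∀ a b : V, G.Adj a b ↔ ¬ s.r a b

/-- `W = K₁ + 3K₂`: vertex 0 joined to three disjoint edges 12, 34, 56. -/
def Wgraph : SimpleGraph (Fin 7) :=
  SimpleGraph.fromRel (fun a b =>
    a = 0 ∨ (a = 1 ∧ b = 2) ∨ (a = 3 ∧ b = 4) ∨ (a = 5 ∧ b = 6))

/-- `Z₁`, the paw: triangle 012 plus pendant edge 23. -/
def pawGraph : SimpleGraph (Fin 4) :=
  SimpleGraph.fromRel (fun a b =>
    (a = 0 ∧ b = 1) ∨ (a = 1 ∧ b = 2) ∨ (a = 0 ∧ b = 2) ∨ (a = 2 ∧ b = 3))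

/-- The claw `K₁,₃`. -/
def clawGraph : SimpleGraph (Fin 4) :=
  SimpleGraph.fromRel (fun a _ => a = 0)

/-- `K₄` minus the edge 23. -/
def K4minusGraph : SimpleGraph (Fin 4) :=
  SimpleGraph.fromRel (fun a b => ¬((a = 2 ∧ b = 3) ∨ (a = 3 ∧ b = 2)))

/-- `K₁,₃**`: spider with legs of lengths 2, 2, 1 (center 0, legs 0-1-2, 0-3-4, 0-5). -/
def spider221 : SimpleGraph (Fin 6) :=
  SimpleGraph.fromRel (fun a b =>
    (a = 0 ∧ b = 1) ∨ (a = 1 ∧ b = 2) ∨ (a = 0 ∧ b = 3) ∨ (a = 3 ∧ b = 4) ∨ (a = 0 ∧ b = 5))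

/-- The theta graph `A_s`: two vertices joined by three internally disjoint paths,
each with `s` internal vertices. -/
def thetaGraph (s : ℕ) : SimpleGraph (Fin 2 ⊕ Fin 3 × Fin s) :=
  SimpleGraph.fromRel (fun a b =>
    (∃ (j : Fin 3) (k : Fin s), a = Sum.inl 0 ∧ b = Sum.inr (j, k) ∧ (k : ℕ) = 0) ∨
    (∃ (j : Fin 3) (k : Fin s), a = Sum.inl 1 ∧ b = Sum.inr (j, k) ∧ (k : ℕ) = s - 1) ∨
    (∃ (j : Fin 3) (k l : Fin s), a = Sum.inr (j, k) ∧ b = Sum.inr (j, l) ∧ (l : ℕ) = (k : ℕ) + 1))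

/-- `A′_s = 2K₁ + sK₂`. -/
def APrime (s : ℕ) : SimpleGraph (Fin 2 ⊕ Fin s × Fin 2) :=
  SimpleGraph.fromRel (fun a b =>
    (∃ (i : Fin 2) (x : Fin s × Fin 2), a = Sum.inl i ∧ b = Sum.inr x) ∨
    (∃ j : Fin s, a = Sum.inr (j, 0) ∧ b = Sum.inr (j, 1)))

/-- `A″_s = K₂ + (2K₂ ∪ K_s)`. -/
def ADoublePrime (s : ℕ) : SimpleGraph (Fin 2 ⊕ (Fin 2 × Fin 2 ⊕ Fin s)) :=
  SimpleGraph.fromRel (fun a b =>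
    (∃ i : Fin 2, a = Sum.inl i) ∨
    (∃ j : Fin 2, a = Sum.inr (Sum.inl (j, 0)) ∧ b = Sum.inr (Sum.inl (j, 1))) ∨
    (∃ p q : Fin s, a = Sum.inr (Sum.inr p) ∧ b = Sum.inr (Sum.inr q)))

/-- `A_s⁽¹⁾`: two disjoint triangles joined by three vertex-disjoint paths with `s`
internal vertices each. -/
def AOne (s : ℕ) : SimpleGraph (Fin 2 × Fin 3 ⊕ Fin 3 × Fin s) :=
  SimpleGraph.fromRel (fun a b =>
    (∃ (t : Fin 2) (i j : Fin 3), a = Sum.inl (t, i) ∧ b = Sum.inl (t, j)) ∨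
    (∃ (j : Fin 3) (k : Fin s), a = Sum.inl (0, j) ∧ b = Sum.inr (j, k) ∧ (k : ℕ) = 0) ∨
    (∃ (j : Fin 3) (k : Fin s), a = Sum.inl (1, j) ∧ b = Sum.inr (j, k) ∧ (k : ℕ) = s - 1) ∨
    (∃ (j : Fin 3) (k l : Fin s), a = Sum.inr (j, k) ∧ b = Sum.inr (j, l) ∧ (l : ℕ) = (k : ℕ) + 1))

/-- `A_s⁽⁵⁾`: vertices `x₁, x₂` and `y_{i,j}`; edges `x₁x₂`, `y_{1,j}y_{2,j}`, `x_i y_{i,j}`. -/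
def AFive (s : ℕ) : SimpleGraph (Fin 2 ⊕ Fin 2 × Fin s) :=
  SimpleGraph.fromRel (fun a b =>
    (a = Sum.inl 0 ∧ b = Sum.inl 1) ∨
    (∃ j : Fin s, a = Sum.inr (0, j) ∧ b = Sum.inr (1, j)) ∨
    (∃ (i : Fin 2) (j : Fin s), a = Sum.inl i ∧ b = Sum.inr (i, j)))

/-! If both `u⁺²u⁻` and `u⁺²x` were missing, take a neighbour `y` of `x` in `H`. Then `u` with
the legs `u u⁺ u⁺²`, `u x y` and `u u⁻` is an induced `K₁,₃**`: triangle-freeness rules out the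
edges `uu⁺²`, `uy` and those among `u⁺, x, u⁻`, while each of `u⁺y`, `u⁺²y`, `u⁻y` would let `C`
detour through `x, y` and become longer. The second claim is the first one for the reversed
cycle. -/

section

variable {V : Type*} {G : SimpleGraph V}

lemma exists_isCycleEmb_of_isChain {l : List V} (hlen : 3 ≤ l.length) (hnd : l.Nodup)
    (hchain : l.IsChain G.Adj) (hclose : ∀ a ∈ l.getLast?, ∀ b ∈ l.head?, G.Adj a b) :
    ∃ g : ZMod l.length → V, IsCycleEmb G l.length g := by
  have : NeZero l.length := ⟨by omega⟩
  refine ⟨fun k => l[k.val]'(ZMod.val_lt k), hlen,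
    fun a b hab => ZMod.val_injective _ (hnd.getElem_inj_iff.mp hab), fun k => ?_⟩
  have hk := ZMod.val_lt k
  have hsucc : (k + 1).val = (k.val + 1) % l.length := by
    rw [ZMod.val_add, ZMod.val_one_eq_one_mod, Nat.mod_eq_of_lt (by omega : 1 < l.length)]
  by_cases hlast : k.val + 1 < l.length
  · simp only [hsucc, Nat.mod_eq_of_lt hlast]
    exact List.isChain_iff_getElem.mp hchain _ hlast
  · have hk' : k.val = l.length - 1 := by omega
    simp only [hsucc, hk', Nat.sub_add_cancel (by omega : 1 ≤ l.length), Nat.mod_self]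
    exact hclose _ (by simp [List.getLast?_eq_getElem?]) _ (by simp [List.head?_eq_getElem?])

namespace IsLongestCycle

variable {n : ℕ} {f : ZMod n → V}

-- Otherwise `P` followed by the arc `f (i + t), …, f (i + n) = f i` is a cycle longer than `f`.
lemma length_lt_of_detour (hC : IsLongestCycle G n f) (i : ZMod n) {t : ℕ} (ht0 : 0 < t)
    (htn : t < n) {P : List V} (hnd : P.Nodup) (hout : ∀ v ∈ P, v ∉ Set.range f)
    (hchain : P.IsChain G.Adj) (hstart : ∀ a ∈ P.head?, G.Adj (f i) a)
    (hend : ∀ b ∈ P.getLast?, G.Adj b (f (i + t))) :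
    P.length < t := by
  obtain ⟨⟨-, hinj, hadj⟩, hmax⟩ := hC
  rcases eq_or_ne P [] with rfl | hP
  · simpa using ht0
  set arc := (List.range (n - t + 1)).map fun k : ℕ => f (i + t + k)
  have harc_nodup : arc.Nodup := by
    refine List.nodup_range.map_on fun a ha b hb hab => ?_
    simp only [List.mem_range] at ha hb
    rw [← ZMod.val_cast_of_lt (by omega : a < n), ← ZMod.val_cast_of_lt (by omega : b < n),
      add_left_cancel (hinj hab)]
  have harc_chain : arc.IsChain G.Adj :=
    (List.isChain_map _).mpr ((List.isChain_range _ _).mpr fun m _ => by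
      simpa [add_assoc] using hadj (i + t + m))
  have harc_head : arc.head? = some (f (i + t)) := by simp [arc, List.head?_range]
  have harc_last : arc.getLast? = some (f i) := by
    have : i + t + ((n - t : ℕ) : ZMod n) = i := by
      rw [Nat.cast_sub htn.le, ZMod.natCast_self]; ring
    simp [arc, List.getLast?_map, List.getLast?_range, this]
  have hdisj : ∀ v ∈ P, v ∉ arc := fun v hv hva => hout v hv <| by
    obtain ⟨k, -, rfl⟩ := List.mem_map.mp hva
    exact ⟨_, rfl⟩
  obtain ⟨g, hg⟩ := exists_isCycleEmb_of_isChain (l := P ++ arc)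
    (by simp [arc]; have := List.length_pos_of_ne_nil hP; omega)
    (List.nodup_append.mpr ⟨hnd, harc_nodup, fun a ha b hb hab => hdisj a ha (hab ▸ hb)⟩)
    (List.isChain_append.mpr ⟨hchain, harc_chain, by simpa [harc_head] using hend⟩)
    (by simpa [List.getLast?_append, harc_last, List.head?_append, List.head?_eq_none_iff, hP]
      using hstart)
  have := hmax _ g hg
  simp [arc] at this
  omega

lemma not_adj_of_detour_two (hC : IsLongestCycle G n f) (i : ZMod n) {t : ℕ} (ht0 : 0 < t)
    (ht2 : t ≤ 2) {z w : V} (hz : z ∉ Set.range f) (hw : w ∉ Set.range f)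
    (hiz : G.Adj (f i) z) (hzw : G.Adj z w) :
    ¬ G.Adj w (f (i + t)) := fun hwi => by
  have := hC.length_lt_of_detour i ht0 (by linarith [hC.1.1]) (P := [z, w]) (by simp [hzw.ne])
    (fun v hv => by rcases List.mem_pair.mp hv with rfl | rfl <;> assumption)
    (by simp [hzw]) (by simpa) (by simpa)
  simp at this
  omega

lemma comp_neg (hC : IsLongestCycle G n f) : IsLongestCycle G n (fun j => f (-j)) := by
  refine ⟨⟨hC.1.1, hC.1.2.1.comp neg_injective, fun j => ?_⟩, hC.2⟩
  show G.Adj (f (-j)) (f (-(j + 1)))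
  rw [neg_add', ← sub_add_cancel (-j) 1]
  simpa using (hC.1.2.2 (-j - 1)).symm

end IsLongestCycle

lemma IsCompOutside.exists_adj {C H : Set V} (hH : IsCompOutside G C H) (hH2 : 2 ≤ H.ncard)
    {x : V} (hx : x ∈ H) : ∃ y ∈ H, G.Adj x y := by
  have : Nontrivial H :=
    Set.nontrivial_coe_sort.mpr (Set.one_lt_ncard_iff_nontrivial_and_finite.mp (by omega)).1
  obtain ⟨⟨y, hy⟩, hxy⟩ := hH.2.2.1.preconnected.exists_adj_of_nontrivial ⟨x, hx⟩
  exact ⟨y, hy, hxy⟩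

def SimpleGraph.Embedding.ofAdjIff {W : Type*} {H : SimpleGraph W}
    (htwin : ∀ a b, (∀ c, H.Adj a c ↔ H.Adj b c) → a = b) (v : W → V)
    (hv : ∀ a b, G.Adj (v a) (v b) ↔ H.Adj a b) : H ↪g G :=
  ⟨⟨v, fun a b hab => htwin a b fun c => by rw [← hv, ← hv, hab]⟩, hv _ _⟩

lemma spider221_eq_of_forall_adj_iff :
    ∀ a b : Fin 6, (∀ c, spider221.Adj a c ↔ spider221.Adj b c) → a = b := by
  simp only [spider221, fromRel_adj]
  set_option synthInstance.maxSize 2000 in decide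

lemma SimpleGraph.CliqueFree.not_hFree_spider221 (htri : G.CliqueFree 3)
    {c a₁ a₂ b₁ b₂ d : V} (hca₁ : G.Adj c a₁) (ha₁a₂ : G.Adj a₁ a₂) (hcb₁ : G.Adj c b₁)
    (hb₁b₂ : G.Adj b₁ b₂) (hcd : G.Adj c d) (ha₁b₂ : ¬ G.Adj a₁ b₂) (ha₂b₁ : ¬ G.Adj a₂ b₁)
    (ha₂b₂ : ¬ G.Adj a₂ b₂) (ha₂d : ¬ G.Adj a₂ d) (hb₂d : ¬ G.Adj b₂ d) :
    ¬ HFree spider221 G := by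
  have hG : ∀ {p q r : V}, G.Adj p q → G.Adj q r → ¬ G.Adj p r := fun hpq hqr hpr =>
    isIndepSet_neighborSet_of_triangleFree _ htri _ hpq.symm hqr hpr.ne hpr
  have hca₂ := hG hca₁ ha₁a₂
  have hcb₂ := hG hcb₁ hb₁b₂
  have ha₁b₁ := hG hca₁.symm hcb₁
  have ha₁d := hG hca₁.symm hcd
  have hb₁d := hG hcb₁.symm hcd
  refine fun h => h ⟨.ofAdjIff spider221_eq_of_forall_adj_iff ![c, a₁, a₂, b₁, b₂, d] ?_⟩
  intro a b
  fin_cases a <;> fin_cases b <;> simp [spider221] <;>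
    first | assumption | (rw [G.adj_comm]; assumption)

lemma IsLongestCycle.adj_add_two_sub_one_or_adj_add_two {n : ℕ} {f : ZMod n → V} {H : Set V}
    {x : V} {i : ZMod n} (htri : G.CliqueFree 3) (hsp : HFree spider221 G)
    (hC : IsLongestCycle G n f) (hH : IsCompOutside G (Set.range f) H) (hH2 : 2 ≤ H.ncard)
    (hx : x ∈ H) (hadj : G.Adj (f i) x) :
    G.Adj (f (i + 2)) (f (i - 1)) ∨ G.Adj (f (i + 2)) x := by
  obtain ⟨y, hyH, hxy⟩ := hH.exists_adj hH2 hx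
  have hxC : x ∉ Set.range f := Set.disjoint_left.mp hH.2.1 hx
  have hyC : y ∉ Set.range f := Set.disjoint_left.mp hH.2.1 hyH
  have hu₁u₂ : G.Adj (f (i + 1)) (f (i + 2)) := by
    simpa [add_assoc, one_add_one_eq_two] using hC.1.2.2 (i + 1)
  have hu_pred : G.Adj (f i) (f (i - 1)) := by simpa using (hC.1.2.2 (i - 1)).symm
  have hu₁y : ¬ G.Adj (f (i + 1)) y := fun h =>
    hC.not_adj_of_detour_two i one_pos one_le_two hxC hyC hadj hxy (by simpa using h.symm)
  have hu₂y : ¬ G.Adj (f (i + 2)) y := fun h =>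
    hC.not_adj_of_detour_two i two_pos le_rfl hxC hyC hadj hxy (by simpa using h.symm)
  have hy_pred : ¬ G.Adj y (f (i - 1)) := fun h =>
    hC.not_adj_of_detour_two (i - 1) one_pos one_le_two hyC hxC h.symm hxy.symm
      (by simpa using hadj.symm)
  by_contra! h
  exact htri.not_hFree_spider221 (hC.1.2.2 i) hu₁u₂ hadj hxy hu_pred hu₁y h.2 hu₂y h.1 hy_pred hsp

end

theorem stmt7_general {V : Type*} (G : SimpleGraph V)
    (htri : G.CliqueFree 3) (hsp : HFree spider221 G)
    (n : ℕ) (f : ZMod n → V) (H : Set V) (x : V) (i : ZMod n)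
    (hC : IsLongestCycle G n f)
    (hH : IsCompOutside G (Set.range f) H) (hH2 : 2 ≤ H.ncard)
    (hx : x ∈ H) (hadj : G.Adj (f i) x) :
    (G.Adj (f (i + 2)) (f (i - 1)) ∨ G.Adj (f (i + 2)) x) ∧
    (G.Adj (f (i - 2)) (f (i + 1)) ∨ G.Adj (f (i - 2)) x) := by
  refine ⟨hC.adj_add_two_sub_one_or_adj_add_two htri hsp hH hH2 hx hadj, ?_⟩
  have hrange : Set.range (fun j => f (-j)) = Set.range f := neg_surjective.range_comp f
  have := hC.comp_neg.adj_add_two_sub_one_or_adj_add_two htri hsp (hrange ▸ hH) hH2 hx (i := -i)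
    (by simpa using hadj)
  simpa [sub_eq_add_neg, add_comm] using this

/-- In a `{K₁,₃**, K₃}`-free graph, for a longest cycle `C` with at least 2 missing
vertices, a component `H` of `G - V(C)` with `|H| ≥ 2`, `x ∈ H` and `u = f i ∈ V(C)`
adjacent to `x`: `E(G) ∩ {u⁺²u⁻, u⁺²x} ≠ ∅` and `E(G) ∩ {u⁻²u⁺, u⁻²x} ≠ ∅`. -/
theorem stmt7 {V : Type*} [Fintype V] (G : SimpleGraph V)
    (htri : G.CliqueFree 3) (hsp : HFree spider221 G)
    (n : ℕ) (f : ZMod n → V) (H : Set V) (x : V) (i : ZMod n)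
    (hC : IsLongestCycle G n f)
    (hmiss : 2 ≤ ((Set.range f)ᶜ : Set V).ncard)
    (hH : IsCompOutside G (Set.range f) H) (hH2 : 2 ≤ H.ncard)
    (hx : x ∈ H) (hadj : G.Adj (f i) x) :
    (G.Adj (f (i + 2)) (f (i - 1)) ∨ G.Adj (f (i + 2)) x) ∧
    (G.Adj (f (i - 2)) (f (i + 1)) ∨ G.Adj (f (i - 2)) x) :=
  stmt7_general G htri hsp n f H x i hC hH hH2 hx hadj
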